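/- For every n ≥ 1 there exist p, p', q, q' ∈ [0,1]^n with ‖p−q‖_2 = ‖p'−q'‖_2 such that ‖Ber(p)−Ber(q)‖_TV / ‖Ber(p')−Ber(q')‖_TV ≥ c√n, where c > 0 is an absolute constant. Specifically, one may take p = (1/n,…,1/n), q = 0, p' = (1/2 + 1/(2n),…), q' = (1/2 − 1/(2n),…). -/

import Mathlib

/-!
For `p = (1/n, …, 1/n)` and `q = 0` the all-zeros outcome alone separates `Ber(p)` from `Ber(q)`:
its probabilities are `(1 - 1/n)^n ≤ 1/e` and `1`, so the total variation is at least `1/4`.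
For `p' = 1/2 + ε`, `q' = 1/2 - ε` with `ε = 1/(2n)` the total variation is controlled by the
Bhattacharyya coefficient `B = ∑ √P √Q` through `TV² ≤ 1 - B²` (Cauchy–Schwarz on
`|P - Q| = |√P - √Q| (√P + √Q)`). The coefficient tensorizes, `B² = (1 - 4ε²)^n ≥ 1 - 4nε²`, hence
the total variation is at most `2ε√n = 1/√n`, while both pairs are at Euclidean distance `1/√n`.
-/

open Finset

/-- Total variation distance between two distributions on a finite set. -/
noncomputable def tv {Ω : Type*} [Fintype Ω] (P Q : Ω → ℝ) : ℝ :=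
  (1/2) * ∑ ω, |P ω - Q ω|

/-- Product Bernoulli distribution on `{0,1}^n` with parameters `p`. -/
def berProd {n : ℕ} (p : Fin n → ℝ) : (Fin n → Bool) → ℝ :=
  fun ω => ∏ i, if ω i then p i else 1 - p i

noncomputable def bhattacharyya {Ω : Type*} [Fintype Ω] (P Q : Ω → ℝ) : ℝ :=
  ∑ ω, √(P ω) * √(Q ω)

section TotalVariation

variable {Ω : Type*} [Fintype Ω] {P Q : Ω → ℝ}

lemma half_abs_sub_le_tv (P Q : Ω → ℝ) (ω₀ : Ω) : |P ω₀ - Q ω₀| / 2 ≤ tv P Q := by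
  have h := single_le_sum (f := fun ω => |P ω - Q ω|) (fun ω _ => abs_nonneg _) (mem_univ ω₀)
  unfold tv
  linarith

lemma tv_pos_of_ne {ω₀ : Ω} (h : P ω₀ ≠ Q ω₀) : 0 < tv P Q :=
  lt_of_lt_of_le (by positivity [sub_ne_zero.mpr h]) (half_abs_sub_le_tv P Q ω₀)

variable (hP : ∀ ω, 0 ≤ P ω) (hQ : ∀ ω, 0 ≤ Q ω) (hP₁ : ∑ ω, P ω = 1) (hQ₁ : ∑ ω, Q ω = 1)
include hP hQ hP₁ hQ₁

lemma sum_sq_sqrt_sub_sqrt : ∑ ω, (√(P ω) - √(Q ω)) ^ 2 = 2 - 2 * bhattacharyya P Q := by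
  have h ω : (√(P ω) - √(Q ω)) ^ 2 = P ω + Q ω - 2 * (√(P ω) * √(Q ω)) := by
    rw [sub_sq, Real.sq_sqrt (hP ω), Real.sq_sqrt (hQ ω)]; ring
  simp only [h, sum_sub_distrib, sum_add_distrib, ← mul_sum, hP₁, hQ₁, bhattacharyya]
  ring

lemma sum_sq_sqrt_add_sqrt : ∑ ω, (√(P ω) + √(Q ω)) ^ 2 = 2 + 2 * bhattacharyya P Q := by
  have h ω : (√(P ω) + √(Q ω)) ^ 2 = P ω + Q ω + 2 * (√(P ω) * √(Q ω)) := by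
    rw [add_sq, Real.sq_sqrt (hP ω), Real.sq_sqrt (hQ ω)]; ring
  simp only [h, sum_add_distrib, ← mul_sum, hP₁, hQ₁, bhattacharyya]
  ring

lemma tv_sq_le_one_sub_bhattacharyya_sq : tv P Q ^ 2 ≤ 1 - bhattacharyya P Q ^ 2 := by
  have hfactor ω : |P ω - Q ω| = |√(P ω) - √(Q ω)| * (√(P ω) + √(Q ω)) := by
    rw [← abs_of_nonneg (by positivity : 0 ≤ √(P ω) + √(Q ω)), ← abs_mul]
    congr 1
    linear_combination Real.sq_sqrt (hQ ω) - Real.sq_sqrt (hP ω)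
  have hCS := sum_mul_sq_le_sq_mul_sq univ (fun ω => |√(P ω) - √(Q ω)|) (fun ω => √(P ω) + √(Q ω))
  simp only [sq_abs, ← hfactor, sum_sq_sqrt_sub_sqrt hP hQ hP₁ hQ₁,
    sum_sq_sqrt_add_sqrt hP hQ hP₁ hQ₁] at hCS
  unfold tv
  nlinarith

end TotalVariation

section ProductBernoulli

variable {n : ℕ} {p q : Fin n → ℝ}

lemma berProd_nonneg (hp : ∀ i, p i ∈ Set.Icc (0 : ℝ) 1) (ω : Fin n → Bool) :
    0 ≤ berProd p ω :=
  prod_nonneg fun i _ => by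
    obtain ⟨h₀, h₁⟩ := hp i
    cases ω i <;> simp [h₀, h₁]

lemma sum_berProd (p : Fin n → ℝ) : ∑ ω, berProd p ω = 1 := by
  calc ∑ ω, berProd p ω = ∏ i, ∑ b : Bool, if b then p i else 1 - p i :=
      (Fintype.prod_sum fun i (b : Bool) => if b then p i else 1 - p i).symm
    _ = 1 := by simp

lemma bhattacharyya_berProd (hp : ∀ i, p i ∈ Set.Icc (0 : ℝ) 1)
    (hq : ∀ i, q i ∈ Set.Icc (0 : ℝ) 1) :
    bhattacharyya (berProd p) (berProd q) =
      ∏ i, (√(p i) * √(q i) + √(1 - p i) * √(1 - q i)) := by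
  have hsqrt {r : Fin n → ℝ} (hr : ∀ i, r i ∈ Set.Icc (0 : ℝ) 1) (ω : Fin n → Bool) :
      √(berProd r ω) = ∏ i, √(if ω i then r i else 1 - r i) := by
    refine Real.sqrt_prod _ fun i _ => ?_
    obtain ⟨h₀, h₁⟩ := hr i
    cases ω i <;> simp [h₀, h₁]
  simp only [bhattacharyya, hsqrt hp, hsqrt hq, ← prod_mul_distrib]
  rw [← Fintype.prod_sum (fun i (b : Bool) =>
    √(if b then p i else 1 - p i) * √(if b then q i else 1 - q i))]
  simp

end ProductBernoulli

lemma one_quarter_le_tv_berProd_inv_zero {n : ℕ} (hn : 1 ≤ n) :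
    1 / 4 ≤ tv (berProd fun _ : Fin n => 1 / (n : ℝ)) (berProd fun _ => 0) := by
  have hn' : (1 : ℝ) ≤ n := by exact_mod_cast hn
  have hzero := half_abs_sub_le_tv (berProd fun _ : Fin n => 1 / (n : ℝ)) (berProd fun _ => 0)
    fun _ => false
  have hexp : (1 - 1 / (n : ℝ)) ^ n ≤ Real.exp (-1) := Real.one_sub_div_pow_le_exp_neg hn'
  have htwo : 2 < Real.exp 1 := by simpa [one_add_one_eq_two] using Real.add_one_lt_exp one_ne_zero
  have hhalf : Real.exp (-1) ≤ 1 / 2 := by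
    rw [Real.exp_neg, inv_eq_one_div]; gcongr
  have hnonneg : 0 ≤ (1 - 1 / (n : ℝ)) ^ n :=
    pow_nonneg (sub_nonneg.mpr ((div_le_one (by positivity)).mpr hn')) n
  simp only [berProd, Bool.false_eq_true, ite_false, prod_const, card_univ, Fintype.card_fin,
    sub_zero, one_pow] at hzero
  rw [abs_of_nonpos (by linarith)] at hzero
  linarith

lemma tv_berProd_half_add_half_sub_le {n : ℕ} {ε : ℝ} (hε₀ : 0 ≤ ε) (hε₁ : ε ≤ 1 / 2) :
    tv (berProd fun _ : Fin n => 1 / 2 + ε) (berProd fun _ => 1 / 2 - ε) ≤ 2 * ε * √n := by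
  have hmem_add : ∀ _ : Fin n, 1 / 2 + ε ∈ Set.Icc (0 : ℝ) 1 := fun _ => ⟨by linarith, by linarith⟩
  have hmem_sub : ∀ _ : Fin n, 1 / 2 - ε ∈ Set.Icc (0 : ℝ) 1 := fun _ => ⟨by linarith, by linarith⟩
  have hB : bhattacharyya (berProd fun _ : Fin n => 1 / 2 + ε) (berProd fun _ => 1 / 2 - ε) ^ 2 =
      (1 - 4 * ε ^ 2) ^ n := by
    rw [bhattacharyya_berProd hmem_add hmem_sub, prod_const, card_univ, Fintype.card_fin, ← pow_mul,
      pow_mul']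
    congr 1
    have h_add := Real.sq_sqrt (by linarith : (0 : ℝ) ≤ 1 / 2 + ε)
    have h_sub := Real.sq_sqrt (by linarith : (0 : ℝ) ≤ 1 / 2 - ε)
    rw [show 1 - (1 / 2 + ε) = 1 / 2 - ε by ring, show 1 - (1 / 2 - ε) = 1 / 2 + ε by ring]
    linear_combination (4 * √(1 / 2 - ε) ^ 2) * h_add + (4 * (1 / 2 + ε)) * h_sub
  have hBernoulli : 1 - n * (4 * ε ^ 2) ≤ (1 - 4 * ε ^ 2) ^ n := by
    have h := one_add_mul_le_pow (a := -(4 * ε ^ 2)) (by nlinarith) n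
    rwa [mul_neg, ← sub_eq_add_neg, ← sub_eq_add_neg] at h
  have htv := tv_sq_le_one_sub_bhattacharyya_sq (berProd_nonneg hmem_add) (berProd_nonneg hmem_sub)
    (sum_berProd _) (sum_berProd _)
  rw [hB] at htv
  apply abs_le_of_sq_le_sq' _ (by positivity) |>.2
  rw [mul_pow, Real.sq_sqrt (Nat.cast_nonneg n)]
  nlinarith

lemma tv_berProd_half_add_half_sub_pos {n : ℕ} (hn : n ≠ 0) {ε : ℝ} (hε₀ : 0 < ε)
    (hε₁ : ε ≤ 1 / 2) :
    0 < tv (berProd fun _ : Fin n => 1 / 2 + ε) (berProd fun _ => 1 / 2 - ε) := by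
  refine tv_pos_of_ne (ω₀ := fun _ => true) (ne_of_gt ?_)
  simp only [berProd, ite_true, prod_const, card_univ, Fintype.card_fin]
  exact pow_lt_pow_left₀ (by linarith) (by linarith) hn

theorem sqrt_n_gap :
    ∃ c : ℝ, c > 0 ∧
      ∀ n : ℕ, n ≥ 1 →
        ∃ p p' q q' : Fin n → ℝ,
          (∀ i, p i ∈ Set.Icc (0:ℝ) 1) ∧ (∀ i, q i ∈ Set.Icc (0:ℝ) 1) ∧
          (∀ i, p' i ∈ Set.Icc (0:ℝ) 1) ∧ (∀ i, q' i ∈ Set.Icc (0:ℝ) 1) ∧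
          Real.sqrt (∑ i, (p i - q i)^2) = Real.sqrt (∑ i, (p' i - q' i)^2) ∧
          tv (berProd p) (berProd q) / tv (berProd p') (berProd q')
            ≥ c * Real.sqrt n := by
  refine ⟨1 / 4, by norm_num, fun n hn => ?_⟩
  have hn' : (1 : ℝ) ≤ n := by exact_mod_cast hn
  have hε₀ : 0 < 1 / (2 * (n : ℝ)) := by positivity
  have hε₁ : 1 / (2 * (n : ℝ)) ≤ 1 / 2 := by gcongr; linarith
  refine ⟨fun _ => 1 / n, fun _ => 1 / 2 + 1 / (2 * n), fun _ => 0, fun _ => 1 / 2 - 1 / (2 * n),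
    fun _ => ⟨by positivity, (div_le_one (by positivity)).mpr hn'⟩, fun _ => ⟨le_rfl, zero_le_one⟩,
    fun _ => ⟨by linarith, by linarith⟩, fun _ => ⟨by linarith, by linarith⟩,
    by congr 1; exact sum_congr rfl fun _ _ => by ring, ?_⟩
  have hden_pos := tv_berProd_half_add_half_sub_pos (n := n) (by omega) hε₀ hε₁
  have hden_le := tv_berProd_half_add_half_sub_le (n := n) hε₀.le hε₁
  rw [ge_iff_le, le_div_iff₀ hden_pos]
  calc _ ≤ 1 / 4 * √n * (2 * (1 / (2 * n)) * √n) := by gcongr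
    _ = 1 / 4 := by
      rw [show 1 / 4 * √n * (2 * (1 / (2 * n)) * √n) = √n * √n / (4 * n) by ring,
        Real.mul_self_sqrt n.cast_nonneg]
      field_simp
    _ ≤ _ := one_quarter_le_tv_berProd_inv_zero hn
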